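/- arXiv:2007.12209 — 7 statements merged into one kernel-verified Lean document; each statement's English description precedes it below -/
import Mathlib

section
/- Let R be an associative ring, C an R-module, cl a closure operation on R-submodules of C, and A ⊆ B ⊆ C submodules with A Artinian. If A is a cl-reduction of B in C (i.e., A^cl_C = B^cl_C), then there exists a minimal cl-reduction K of B in C with K ⊆ A; that is, K ⊆ A, K^cl_C = B^cl_C, and any cl-reduction E of B in C with E ⊆ K satisfies E = K. -/
theorem Submodule.exists_le_minimal_of_isArtinian {R M : Type*} [Ring R] [AddCommGroup M]
    [Module R M] (A : Submodule R M) [IsArtinian R A] {P : Submodule R M → Prop} (hA : P A) :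
    ∃ K ≤ A, Minimal P K := by
  have : WellFoundedLT (Set.Iic A) := A.mapIic.symm.toOrderEmbedding.wellFoundedLT
  obtain ⟨K, hK⟩ :=
    exists_minimal_of_wellFoundedLT (fun K : Set.Iic A ↦ P K) ⟨⟨A, le_refl A⟩, hA⟩
  exact ⟨K, K.2, hK.1, fun E hE hEK ↦ hK.2 (y := ⟨E, hEK.trans K.2⟩) hE hEK⟩

theorem exists_minimal_reduction_of_artinian_general
    {R C : Type*} [Ring R] [AddCommGroup C] [Module R C]
    (cl : Submodule R C → Submodule R C)
    (A B : Submodule R C) (hAB : A ≤ B) [IsArtinian R A]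
    (hred : cl A = cl B) :
    ∃ K : Submodule R C, K ≤ A ∧ K ≤ B ∧ cl K = cl B ∧
      ∀ E : Submodule R C, E ≤ B → cl E = cl B → E ≤ K → E = K := by
  obtain ⟨K, hKA, ⟨hKB, hKcl⟩, hKmin⟩ :=
    A.exists_le_minimal_of_isArtinian (P := fun E ↦ E ≤ B ∧ cl E = cl B) ⟨hAB, hred⟩
  exact ⟨K, hKA, hKB, hKcl, fun E hEB hEcl hEK ↦ le_antisymm hEK (hKmin ⟨hEB, hEcl⟩ hEK)⟩

/-- If `A` is an Artinian submodule that is a `cl`-reduction of `B` in `C`,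
then there is a minimal `cl`-reduction `K` of `B` in `C` with `K ⊆ A`. -/
theorem exists_minimal_reduction_of_artinian
    {R C : Type*} [Ring R] [AddCommGroup C] [Module R C]
    (cl : Submodule R C → Submodule R C)
    (hext : ∀ L, L ≤ cl L)
    (hmono : ∀ L N : Submodule R C, L ≤ N → cl L ≤ cl N)
    (hidem : ∀ L, cl (cl L) = cl L)
    (A B : Submodule R C) (hAB : A ≤ B) [IsArtinian R A]
    (hred : cl A = cl B) :
    ∃ K : Submodule R C, K ≤ A ∧ K ≤ B ∧ cl K = cl B ∧
      ∀ E : Submodule R C, E ≤ B → cl E = cl B → E ≤ K → E = K :=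
  exists_minimal_reduction_of_artinian_general cl A B hAB hred
end

section
/- Let (R, m) → (S, n) be a local homomorphism of Noetherian local rings and B a finitely generated S-module. Define the closure cl_B on finitely generated R-modules by: for L ⊆ M, L^{cl_B}_M = {x ∈ M : the image of x in M ⊗_R B lies in the image of L ⊗_R B → M ⊗_R B}. Then cl_B is a Nakayama closure: if L ⊆ N ⊆ M are finitely generated R-modules with N ⊆ (L + mN)^{cl_B}_M, then L^{cl_B}_M = N^{cl_B}_M. -/
/-!
Tensoring on the left, `B ⊗[R] M` is a finitely generated module over the Noetherian local ring
`S`, and the image `Q_P` of `B ⊗[R] P` in it is an `S`-submodule. Membership in `P^{cl_B}_M` is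
membership of the elementary tensors `b ⊗ x` in `Q_P`. The hypothesis gives
`Q_N ≤ Q_{L + mN} ≤ Q_L + m_S Q_N`, because `m` maps into `m_S`, so Nakayama's lemma over `S`
gives `Q_N ≤ Q_L`, hence `Q_L = Q_N` and the two closures agree.
-/

open TensorProduct IsLocalRing

namespace Submodule

section lTensorRange

variable {R : Type*} (S : Type*) [CommSemiring R] [Semiring S] [Algebra R S]
  (B : Type*) [AddCommMonoid B] [Module S B] [Module R B] [IsScalarTower R S B]
  {M : Type*} [AddCommMonoid M] [Module R M]

def lTensorRange (P : Submodule R M) : Submodule S (B ⊗[R] M) :=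
  LinearMap.range (AlgebraTensorModule.lTensor S B P.subtype)

variable {S B}

theorem tmul_mem_lTensorRange {P : Submodule R M} (b : B) {p : M} (hp : p ∈ P) :
    b ⊗ₜ[R] p ∈ P.lTensorRange S B :=
  ⟨b ⊗ₜ ⟨p, hp⟩, rfl⟩

theorem lTensorRange_le_iff {P : Submodule R M} {Q : Submodule S (B ⊗[R] M)} :
    P.lTensorRange S B ≤ Q ↔ ∀ b : B, ∀ p ∈ P, b ⊗ₜ[R] p ∈ Q := by
  refine ⟨fun h b p hp => h (tmul_mem_lTensorRange b hp), fun h => ?_⟩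
  rintro _ ⟨y, rfl⟩
  induction y using TensorProduct.induction_on with
  | zero => simp
  | tmul b p => exact h b p p.2
  | add y z hy hz => rw [map_add]; exact Q.add_mem hy hz

variable (S B) in
theorem lTensorRange_mono : Monotone (lTensorRange (R := R) (M := M) S B) :=
  fun _ _ hPP' => lTensorRange_le_iff.2 fun b _ hp => tmul_mem_lTensorRange b (hPP' hp)

theorem lTensorRange_sup_le (P P' : Submodule R M) :
    (P ⊔ P').lTensorRange S B ≤ P.lTensorRange S B ⊔ P'.lTensorRange S B := by
  refine lTensorRange_le_iff.2 fun b _ h => ?_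
  obtain ⟨p, hp, p', hp', rfl⟩ := mem_sup.1 h
  rw [tmul_add]
  exact add_mem_sup (tmul_mem_lTensorRange b hp) (tmul_mem_lTensorRange b hp')

theorem lTensorRange_smul_le (I : Ideal R) (P : Submodule R M) :
    (I • P).lTensorRange S B ≤ I.map (algebraMap R S) • P.lTensorRange S B := by
  refine lTensorRange_le_iff.2 fun b _ h => smul_induction_on h (fun r hr p hp => ?_)
    (fun x y hx hy => by rw [tmul_add]; exact add_mem hx hy)
  rw [tmul_smul, ← algebraMap_smul S]
  exact smul_mem_smul (Ideal.mem_map_of_mem _ hr) (tmul_mem_lTensorRange b hp)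

variable (S) in
theorem mem_range_rTensor_subtype_iff {P : Submodule R M} {z : M ⊗[R] B} :
    z ∈ LinearMap.range (P.subtype.rTensor B) ↔
      TensorProduct.comm R M B z ∈ P.lTensorRange S B := by
  constructor
  · rintro ⟨y, rfl⟩
    exact ⟨TensorProduct.comm R P B y, LinearMap.lTensor_comm _ y⟩
  · rintro ⟨w, hw⟩
    refine ⟨(TensorProduct.comm R P B).symm w, (TensorProduct.comm R M B).injective ?_⟩
    rw [← LinearMap.lTensor_comm, LinearEquiv.apply_symm_apply]
    exact hw

end lTensorRange

theorem lTensorRange_fg {R S : Type*} [CommSemiring R] [CommRing S] [Algebra R S]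
    [IsNoetherianRing S]
    {B : Type*} [AddCommGroup B] [Module S B] [Module R B] [IsScalarTower R S B] [Module.Finite S B]
    {M : Type*} [AddCommGroup M] [Module R M] [Module.Finite R M] (P : Submodule R M) :
    (P.lTensorRange S B).FG :=
  have : Module.Finite S (B ⊗[R] M) := .equiv (AlgebraTensorModule.cancelBaseChange R S S B M)
  IsNoetherian.noetherian _

end Submodule

open Submodule in
theorem moduleClosure_isNakayama_general
    {R S : Type*} [CommRing R] [IsLocalRing R]
    [CommRing S] [IsNoetherianRing S] [IsLocalRing S]
    [Algebra R S] [IsLocalHom (algebraMap R S)]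
    (B : Type*) [AddCommGroup B] [Module S B] [Module R B] [IsScalarTower R S B]
    [Module.Finite S B]
    {M : Type*} [AddCommGroup M] [Module R M] [Module.Finite R M]
    (L N : Submodule R M) (hLN : L ≤ N)
    (hNak : ∀ x ∈ N, ∀ b : B,
      x ⊗ₜ[R] b ∈ LinearMap.range
        (LinearMap.rTensor B (L ⊔ maximalIdeal R • N).subtype)) :
    ∀ x : M,
      (∀ b : B, x ⊗ₜ[R] b ∈ LinearMap.range (LinearMap.rTensor B L.subtype)) ↔
      (∀ b : B, x ⊗ₜ[R] b ∈ LinearMap.range (LinearMap.rTensor B N.subtype)) := by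
  have hN : N.lTensorRange S B ≤ L.lTensorRange S B ⊔ maximalIdeal S • N.lTensorRange S B :=
    calc N.lTensorRange S B
        ≤ (L ⊔ maximalIdeal R • N).lTensorRange S B :=
          lTensorRange_le_iff.2 fun b n hn => by
            simpa only [comm_tmul] using (mem_range_rTensor_subtype_iff S).1 (hNak n hn b)
      _ ≤ L.lTensorRange S B ⊔ (maximalIdeal R • N).lTensorRange S B :=
          lTensorRange_sup_le _ _
      _ ≤ L.lTensorRange S B ⊔ maximalIdeal S • N.lTensorRange S B :=
          sup_le_sup_left ((lTensorRange_smul_le _ _).trans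
            (smul_mono_left (map_maximalIdeal_le _))) _
  have hQ : L.lTensorRange S B = N.lTensorRange S B :=
    (lTensorRange_mono S B hLN).antisymm <| le_of_le_smul_of_le_jacobson_bot (lTensorRange_fg N)
      (jacobson_eq_maximalIdeal ⊥ bot_ne_top).ge hN
  intro x
  simp only [mem_range_rTensor_subtype_iff S, comm_tmul, hQ]

/-- If `(R,m) → (S,n)` is a local homomorphism of Noetherian local rings and
`B` is a finitely generated `S`-module, then the module closure `cl_B` (where
`x ∈ L^{cl_B}_M` iff for every `b : B`, `x ⊗ b` lies in the image of `L ⊗_R B → M ⊗_R B`)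
is a Nakayama closure on finitely generated `R`-modules. -/
theorem moduleClosure_isNakayama
    {R S : Type*} [CommRing R] [IsNoetherianRing R] [IsLocalRing R]
    [CommRing S] [IsNoetherianRing S] [IsLocalRing S]
    [Algebra R S] [IsLocalHom (algebraMap R S)]
    (B : Type*) [AddCommGroup B] [Module S B] [Module R B] [IsScalarTower R S B]
    [Module.Finite S B]
    {M : Type*} [AddCommGroup M] [Module R M] [Module.Finite R M]
    (L N : Submodule R M) (hLN : L ≤ N)
    (hNak : ∀ x ∈ N, ∀ b : B,
      x ⊗ₜ[R] b ∈ LinearMap.range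
        (LinearMap.rTensor B (L ⊔ maximalIdeal R • N).subtype)) :
    ∀ x : M,
      (∀ b : B, x ⊗ₜ[R] b ∈ LinearMap.range (LinearMap.rTensor B L.subtype)) ↔
      (∀ b : B, x ⊗ₜ[R] b ∈ LinearMap.range (LinearMap.rTensor B N.subtype)) :=
  moduleClosure_isNakayama_general (S := S) B L N hLN hNak
end

section
/- Let (R,m) be a Noetherian local ring and B an R-algebra such that mB is contained in the Jacobson radical of B. Then the module closure cl_B is a Nakayama closure on finitely generated R-modules: if L ⊆ N ⊆ M are finitely generated R-modules with N ⊆ (L + mN)^{cl_B}_M, then L^{cl_B}_M = N^{cl_B}_M. -/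
open TensorProduct IsLocalRing

/-!
Identify `L^{cl_B}_M` with the elements `x` such that `1 ⊗ x` lies in the base change
`B ⊗ L ⊆ B ⊗ M`. The hypothesis then says `B ⊗ N ≤ B ⊗ L + (mB) • (B ⊗ N)`; since `N` is
finitely generated (`R` is Noetherian) so is `B ⊗ N`, and Nakayama's lemma over `B`, applicable
because `mB` lies in the Jacobson radical, gives `B ⊗ N = B ⊗ L`.
-/

namespace Submodule

section Semiring

variable {R M : Type*} (A : Type*) [CommSemiring R] [AddCommMonoid M] [Module R M]

theorem baseChange_le_iff_forall_tmul_mem [Semiring A] [Algebra R A] {p : Submodule R M}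
    {q : Submodule A (A ⊗[R] M)} :
    p.baseChange A ≤ q ↔ ∀ x ∈ p, (1 : A) ⊗ₜ[R] x ∈ q := by
  rw [baseChange_eq_span, span_le]
  exact ⟨fun h x hx ↦ h ⟨x, hx, rfl⟩, by rintro h _ ⟨x, hx, rfl⟩; exact h x hx⟩

theorem baseChange_sup [Semiring A] [Algebra R A] (p q : Submodule R M) :
    (p ⊔ q).baseChange A = p.baseChange A ⊔ q.baseChange A := by
  refine le_antisymm ((baseChange_le_iff_forall_tmul_mem A).2 fun x hx ↦ ?_)
    (sup_le (baseChange_mono A le_sup_left) (baseChange_mono A le_sup_right))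
  obtain ⟨y, hy, z, hz, rfl⟩ := mem_sup.1 hx
  rw [tmul_add]
  exact add_mem_sup (tmul_mem_baseChange_of_mem 1 hy) (tmul_mem_baseChange_of_mem 1 hz)

theorem baseChange_smul_le [CommSemiring A] [Algebra R A] (I : Ideal R) (p : Submodule R M) :
    (I • p).baseChange A ≤ I.map (algebraMap R A) • p.baseChange A := by
  refine (baseChange_le_iff_forall_tmul_mem A).2 fun x hx ↦
    smul_induction_on hx (fun r hr y hy ↦ ?_) fun y z hy hz ↦ by
      rw [tmul_add]; exact add_mem hy hz
  rw [tmul_smul, ← algebraMap_smul A r ((1 : A) ⊗ₜ[R] y)]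
  exact smul_mem_smul (Ideal.mem_map_of_mem _ hr) (tmul_mem_baseChange_of_mem 1 hy)

variable {A} in
theorem FG.baseChange [Semiring A] [Algebra R A] {p : Submodule R M} (hp : p.FG) :
    (p.baseChange A).FG := by
  obtain ⟨s, rfl⟩ := hp
  rw [baseChange_span]
  exact fg_span (s.finite_toSet.image _)

theorem tmul_one_mem_range_rTensor_subtype_iff [Semiring A] [Algebra R A] (p : Submodule R M)
    (x : M) :
    x ⊗ₜ[R] (1 : A) ∈ LinearMap.range (p.subtype.rTensor A) ↔
      (1 : A) ⊗ₜ[R] x ∈ p.baseChange A := by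
  have comm_rTensor (t : p ⊗[R] A) : TensorProduct.comm R M A (p.subtype.rTensor A t) =
      p.subtype.baseChange A (TensorProduct.comm R p A t) := by
    rw [← LinearMap.lTensor_comm, LinearMap.baseChange_eq_ltensor]
  constructor
  · rintro ⟨t, ht⟩
    exact ⟨TensorProduct.comm R p A t, by rw [← comm_rTensor, ht, comm_tmul]⟩
  · rintro ⟨u, hu⟩
    refine ⟨(TensorProduct.comm R p A).symm u, (TensorProduct.comm R M A).injective ?_⟩
    rw [comm_rTensor, LinearEquiv.apply_symm_apply, hu, comm_tmul]

end Semiring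

theorem baseChange_eq_of_le_baseChange_sup_smul {R M A : Type*} [CommRing R] [CommRing A]
    [Algebra R A] [AddCommGroup M] [Module R M] {I : Ideal R}
    (hI : I.map (algebraMap R A) ≤ (⊥ : Ideal A).jacobson) {p q : Submodule R M}
    (hq : q.FG) (hpq : p ≤ q) (h : q.baseChange A ≤ (p ⊔ I • q).baseChange A) :
    p.baseChange A = q.baseChange A := by
  refine le_antisymm (baseChange_mono A hpq)
    (le_of_le_smul_of_le_jacobson_bot hq.baseChange hI ?_)
  rw [baseChange_sup] at h
  exact h.trans (sup_le_sup_left (baseChange_smul_le A I q) _)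

end Submodule

/-- If `(R,m)` is Noetherian local and `B` is an `R`-algebra with `mB`
contained in the Jacobson radical of `B`, then the algebra closure `cl_B` (where
`x ∈ L^{cl_B}_M` iff `x ⊗ 1` lies in the image of `L ⊗_R B → M ⊗_R B`) is a
Nakayama closure on finitely generated `R`-modules. -/
theorem algebraClosure_isNakayama
    {R : Type*} [CommRing R] [IsNoetherianRing R] [IsLocalRing R]
    (B : Type*) [CommRing B] [Algebra R B]
    (hJac : Ideal.map (algebraMap R B) (maximalIdeal R) ≤ (⊥ : Ideal B).jacobson)
    {M : Type*} [AddCommGroup M] [Module R M] [Module.Finite R M]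
    (L N : Submodule R M) (hLN : L ≤ N)
    (hNak : ∀ x ∈ N,
      x ⊗ₜ[R] (1 : B) ∈ LinearMap.range
        (LinearMap.rTensor B (L ⊔ maximalIdeal R • N).subtype)) :
    ∀ x : M,
      (x ⊗ₜ[R] (1 : B) ∈ LinearMap.range (LinearMap.rTensor B L.subtype)) ↔
      (x ⊗ₜ[R] (1 : B) ∈ LinearMap.range (LinearMap.rTensor B N.subtype)) := by
  have hN : N.baseChange B ≤ (L ⊔ maximalIdeal R • N).baseChange B :=
    (Submodule.baseChange_le_iff_forall_tmul_mem B).2 fun y hy ↦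
      (Submodule.tmul_one_mem_range_rTensor_subtype_iff B _ y).1 (hNak y hy)
  intro x
  rw [Submodule.tmul_one_mem_range_rTensor_subtype_iff,
    Submodule.tmul_one_mem_range_rTensor_subtype_iff,
    Submodule.baseChange_eq_of_le_baseChange_sup_smul hJac (IsNoetherian.noetherian N) hLN hN]
end

section
/- Let (R,m) be a Noetherian local ring and {cl_j}_{j∈Γ} a directed family of residual, functorial Nakayama closure operations on finitely generated R-modules (Γ directed, and cl_j ≤ cl_{j'} whenever j ≤ j'). Suppose cl defined by L^{cl}_M = ∪_j L^{cl_j}_M is idempotent (hence a closure operation). Then cl is a Nakayama closure. -/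
open IsLocalRing

/-!
Since `M` is Noetherian, `N` is a compact element of the submodule lattice, so the containment
`N ≤ ⨆ j, (L + mN)^{cl_j}` already holds for a single `cl_j`, and by directedness for every
`cl_{j'}` with `j'` above any given index. Each `cl_{j'}` being Nakayama then gives
`N^{cl_{j'}} = L^{cl_{j'}}`, which bounds every `N^{cl_j}` by the union of the `L^{cl_j}`.
-/

theorem IsCompactElement.exists_ge_of_le_iSup_of_monotone {α Γ : Type*}
    [CompleteLattice α] [Preorder Γ] [IsDirected Γ (· ≤ ·)] {k : α} (hk : IsCompactElement k)
    {f : Γ → α} (hf : Monotone f) (h : k ≤ ⨆ j, f j) (j₀ : Γ) : ∃ j, j₀ ≤ j ∧ k ≤ f j := by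
  have : Nonempty Γ := ⟨j₀⟩
  obtain ⟨_, ⟨j, rfl⟩, hkj⟩ :=
    (CompleteLattice.isCompactElement_iff_le_of_directed_sSup_le _ k).mp hk (Set.range f)
      (Set.range_nonempty f) hf.directed_le.directedOn_range h
  obtain ⟨j', hj₀j', hjj'⟩ := exists_ge_ge j₀ j
  exact ⟨j', hj₀j', hkj.trans (hf hjj')⟩

namespace Submodule

variable {R M : Type*} [CommRing R] [AddCommGroup M] [Module R M]

def IsNakayamaClosure (I : Ideal R) (cl : Submodule R M → Submodule R M) : Prop :=
  ∀ ⦃L N : Submodule R M⦄, L ≤ N → N ≤ cl (L ⊔ I • N) → cl L = cl N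

theorem IsNakayamaClosure.iSup [IsNoetherian R M] {Γ : Type*} [Preorder Γ]
    [IsDirected Γ (· ≤ ·)] {I : Ideal R} {c : Γ → Submodule R M → Submodule R M}
    (hc : ∀ j, IsNakayamaClosure I (c j)) (hmono : ∀ j, Monotone (c j)) (hdir : Monotone c) :
    IsNakayamaClosure I (⨆ j, c j) := by
  intro L N hLN hN
  simp only [iSup_apply] at hN ⊢
  refine le_antisymm (iSup_mono fun j => hmono j hLN) (iSup_le fun j => ?_)
  have hNcompact : IsCompactElement N := (fg_iff_compact N).mp (IsNoetherian.noetherian N)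
  obtain ⟨j', hjj', hNj'⟩ := hNcompact.exists_ge_of_le_iSup_of_monotone
    (fun _ _ h => hdir h _) hN j
  calc c j N ≤ c j' N := hdir hjj' N
    _ = c j' L := (hc j' hLN hNj').symm
    _ ≤ ⨆ j, c j L := le_iSup (fun j => c j L) j'

end Submodule

theorem directed_sup_of_nakayama_closures_isNakayama_general
    {R : Type} [CommRing R] [IsNoetherianRing R] [IsLocalRing R]
    {Γ : Type} [Preorder Γ] [IsDirected Γ (· ≤ ·)]
    (c : Γ → ∀ (M : Type) [AddCommGroup M] [Module R M] [Module.Finite R M],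
      Submodule R M → Submodule R M)
    (hmono : ∀ j (M : Type) [AddCommGroup M] [Module R M] [Module.Finite R M]
      (L L' : Submodule R M), L ≤ L' → c j M L ≤ c j M L')
    -- each `c j` is Nakayama:
    (hNak : ∀ j (M : Type) [AddCommGroup M] [Module R M] [Module.Finite R M]
      (L N : Submodule R M), L ≤ N → N ≤ c j M (L ⊔ maximalIdeal R • N) →
        c j M L = c j M N)
    -- the family is directed:
    (hdir : ∀ j j' : Γ, j ≤ j' → ∀ (M : Type) [AddCommGroup M] [Module R M]
      [Module.Finite R M] (L : Submodule R M), c j M L ≤ c j' M L) :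
    -- conclusion: `cl` is a Nakayama closure
    ∀ (M : Type) [AddCommGroup M] [Module R M] [Module.Finite R M]
      (L N : Submodule R M), L ≤ N → N ≤ ⨆ j, c j M (L ⊔ maximalIdeal R • N) →
        (⨆ j, c j M L) = ⨆ j, c j M N := by
  intro M _ _ _ L N hLN hN
  have hNakSup : Submodule.IsNakayamaClosure (maximalIdeal R) (⨆ j, c j M) :=
    .iSup (fun j => hNak j M) (fun j => hmono j M) (fun j j' h => hdir j j' h M)
  simpa only [iSup_apply] using hNakSup hLN (by simpa only [iSup_apply] using hN)

/-- A directed union of residual, functorial Nakayama closure operations on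
finitely generated modules over a Noetherian local ring, if idempotent, is again a
Nakayama closure. -/
theorem directed_sup_of_nakayama_closures_isNakayama
    {R : Type} [CommRing R] [IsNoetherianRing R] [IsLocalRing R]
    {Γ : Type} [Preorder Γ] [IsDirected Γ (· ≤ ·)] [Nonempty Γ]
    (c : Γ → ∀ (M : Type) [AddCommGroup M] [Module R M] [Module.Finite R M],
      Submodule R M → Submodule R M)
    -- each `c j` is a closure operation:
    (hext : ∀ j (M : Type) [AddCommGroup M] [Module R M] [Module.Finite R M]
      (L : Submodule R M), L ≤ c j M L)
    (hmono : ∀ j (M : Type) [AddCommGroup M] [Module R M] [Module.Finite R M]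
      (L L' : Submodule R M), L ≤ L' → c j M L ≤ c j M L')
    (hidem : ∀ j (M : Type) [AddCommGroup M] [Module R M] [Module.Finite R M]
      (L : Submodule R M), c j M (c j M L) = c j M L)
    -- each `c j` is residual:
    (hres : ∀ j (M : Type) [AddCommGroup M] [Module R M] [Module.Finite R M]
      (P : Type) [AddCommGroup P] [Module R P] [Module.Finite R P]
      (q : M →ₗ[R] P), Function.Surjective q →
        c j M (LinearMap.ker q) = Submodule.comap q (c j P ⊥))
    -- each `c j` is functorial:
    (hfun : ∀ j (M : Type) [AddCommGroup M] [Module R M] [Module.Finite R M]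
      (P : Type) [AddCommGroup P] [Module R P] [Module.Finite R P]
      (g : M →ₗ[R] P) (L : Submodule R M),
        Submodule.map g (c j M L) ≤ c j P (Submodule.map g L))
    -- each `c j` is Nakayama:
    (hNak : ∀ j (M : Type) [AddCommGroup M] [Module R M] [Module.Finite R M]
      (L N : Submodule R M), L ≤ N → N ≤ c j M (L ⊔ maximalIdeal R • N) →
        c j M L = c j M N)
    -- the family is directed:
    (hdir : ∀ j j' : Γ, j ≤ j' → ∀ (M : Type) [AddCommGroup M] [Module R M]
      [Module.Finite R M] (L : Submodule R M), c j M L ≤ c j' M L)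
    -- the union `cl := ⨆ j, c j` is assumed idempotent:
    (hidem' : ∀ (M : Type) [AddCommGroup M] [Module R M] [Module.Finite R M]
      (L : Submodule R M), (⨆ j, c j M (⨆ j', c j' M L)) = ⨆ j, c j M L) :
    -- conclusion: `cl` is a Nakayama closure
    ∀ (M : Type) [AddCommGroup M] [Module R M] [Module.Finite R M]
      (L N : Submodule R M), L ≤ N → N ≤ ⨆ j, c j M (L ⊔ maximalIdeal R • N) →
        (⨆ j, c j M L) = ⨆ j, c j M N :=
  directed_sup_of_nakayama_closures_isNakayama_general c hmono hNak hdir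
end

section
/- Let (R, m, k) be a Noetherian local ring and A a Matlis-dualizable R-module (A ≅ A^∨∨ via the biduality map). Elements g_1, …, g_t ∈ A^∨ = Hom_R(A, E_R(k)) satisfy ∩_{i=1}^t ker(g_i) = 0 if and only if g_1, …, g_t generate A^∨ as an R-module. -/
/-!
If the `gᵢ` generate `A^∨` and `x` lies in every `ker gᵢ`, then every functional kills `x`,
so `x` maps to `0` in `A^∨∨` and biduality gives `x = 0`.

Conversely, an injective module `E` containing `k` separates the points of every module: for
`c ≠ 0` we have `R ∙ c ≅ R ⧸ J` with `J ⊆ m`, and `R ⧸ J → k → E` extends along `R ⧸ J ↪ C`.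
If the `gᵢ` spanned a proper `S ⊂ A^∨`, a functional on `A^∨ ⧸ S` not vanishing at some `f₀ ∉ S`
would, by biduality, be evaluation at some `x` with `gᵢ x = 0` for all `i`, so `x = 0`: absurd.

Extending maps into `E` from modules in arbitrary universes uses Baer's criterion, which needs
`R` to be small relative to `E`; this follows from `k ↪ E` since `R ↪ ∏ₙ R ⧸ mⁿ` (Krull) and each
`R ⧸ mⁿ` is built from finitely many copies of `k`.
-/

open IsLocalRing

universe w

lemma Submodule.small_of_small_quotient {R M : Type*} [Ring R] [AddCommGroup M] [Module R M]
    (N : Submodule R M) [Small.{w} N] [hQ : Small.{w} (M ⧸ N)] : Small.{w} M :=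
  have : Small.{w} (M ⧸ N.toAddSubgroup) := hQ
  small_map (AddSubgroup.addGroupEquivQuotientProdAddSubgroup (s := N.toAddSubgroup))

lemma IsLocalRing.small_of_isTorsionBySet_maximalIdeal {R M : Type*} [CommRing R] [IsLocalRing R]
    [AddCommGroup M] [Module R M] [Module.Finite R M] [hk : Small.{w} (ResidueField R)]
    (hM : Module.IsTorsionBySet R M (maximalIdeal R)) : Small.{w} M := by
  let := hM.module
  have : Small.{w} (R ⧸ maximalIdeal R) := hk
  have : Module.Finite (R ⧸ maximalIdeal R) M := Module.Finite.of_restrictScalars_finite R _ M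
  exact Module.Finite.small (R ⧸ maximalIdeal R) M

lemma IsLocalRing.small_quotient_maximalIdeal_pow {R : Type*} [CommRing R] [IsNoetherianRing R]
    [IsLocalRing R] [Small.{w} (ResidueField R)] (n : ℕ) :
    Small.{w} (R ⧸ maximalIdeal R ^ n) := by
  induction n with
  | zero =>
    rw [pow_zero, Ideal.one_eq_top]
    infer_instance
  | succ n ih =>
    let K := Submodule.map (maximalIdeal R ^ (n + 1)).mkQ (maximalIdeal R ^ n)
    have hK : Module.IsTorsionBySet R K (maximalIdeal R) := by
      rintro ⟨y, hy⟩ ⟨a, ha⟩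
      obtain ⟨x, hx, rfl⟩ := Submodule.mem_map.mp hy
      apply Subtype.ext
      show a • Submodule.Quotient.mk x = 0
      rw [← Submodule.Quotient.mk_smul, Submodule.Quotient.mk_eq_zero, pow_succ']
      exact Ideal.mul_mem_mul ha hx
    have : Small.{w} K := small_of_isTorsionBySet_maximalIdeal hK
    have : Small.{w} ((R ⧸ maximalIdeal R ^ (n + 1)) ⧸ K) := small_map
      (Submodule.quotientQuotientEquivQuotient (maximalIdeal R ^ (n + 1)) (maximalIdeal R ^ n)
        (Ideal.pow_le_pow_right n.le_succ)).toEquiv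
    exact K.small_of_small_quotient

lemma IsLocalRing.small_of_small_residueField {R : Type*} [CommRing R] [IsNoetherianRing R]
    [IsLocalRing R] [Small.{w} (ResidueField R)] : Small.{w} R := by
  have := small_quotient_maximalIdeal_pow (R := R)
  refine small_of_injective (f := fun r (n : ℕ) ↦ Ideal.Quotient.mk (maximalIdeal R ^ n) r) ?_
  intro a b hab
  rw [← sub_eq_zero, ← Submodule.mem_bot R,
    ← Ideal.iInf_pow_eq_bot_of_isLocalRing _ (maximalIdeal.isMaximal R).ne_top, Submodule.mem_iInf]
  exact fun n ↦ Ideal.Quotient.eq.mp (congrFun hab n)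

lemma IsLocalRing.exists_linearMap_apply_ne_zero {R E C : Type*} [CommRing R] [IsLocalRing R]
    [AddCommGroup E] [Module R E] [AddCommGroup C] [Module R C] (hE : Module.Baer R E)
    (ι : ResidueField R →ₗ[R] E) (hι : Function.Injective ι) {c : C} (hc : c ≠ 0) :
    ∃ ψ : C →ₗ[R] E, ψ c ≠ 0 := by
  let J := LinearMap.ker (LinearMap.toSpanSingleton R C c)
  have hJ : J ≤ maximalIdeal R := le_maximalIdeal fun h ↦ hc <| by
    simpa [J] using (h ▸ Submodule.mem_top : (1 : R) ∈ J)
  obtain ⟨ψ, hψ⟩ := hE.extension_property (J.liftQ _ le_rfl)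
    (by rw [← LinearMap.ker_eq_bot, Submodule.ker_liftQ_eq_bot _ _ _ le_rfl])
    (ι ∘ₗ J.mapQ (maximalIdeal R) LinearMap.id hJ)
  refine ⟨ψ, fun h ↦ one_ne_zero (α := ResidueField R) (hι ?_)⟩
  have key := LinearMap.congr_fun hψ (Submodule.Quotient.mk 1)
  rw [LinearMap.comp_apply, Submodule.liftQ_apply, LinearMap.toSpanSingleton_apply, one_smul,
    h] at key
  rw [map_zero]
  exact key.symm

section Biduality

variable {R A E κ : Type*} [CommRing R] [AddCommGroup A] [Module R A] [AddCommGroup E] [Module R E]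

lemma span_eq_top_of_iInf_ker_eq_bot [IsLocalRing R] (hE : Module.Baer R E)
    (ι : ResidueField R →ₗ[R] E) (hι : Function.Injective ι)
    (hA : Function.Surjective ((LinearMap.id : (A →ₗ[R] E) →ₗ[R] (A →ₗ[R] E)).flip))
    {g : κ → A →ₗ[R] E} (hg : (⨅ i, LinearMap.ker (g i)) = ⊥) :
    Submodule.span R (Set.range g) = ⊤ := by
  set S := Submodule.span R (Set.range g)
  by_contra hne
  obtain ⟨f₀, -, hf₀⟩ := SetLike.exists_of_lt (lt_top_iff_ne_top.2 hne)
  obtain ⟨ψ, hψ⟩ := exists_linearMap_apply_ne_zero hE ι hι (c := S.mkQ f₀) (by simpa using hf₀)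
  obtain ⟨x, hx⟩ := hA (ψ ∘ₗ S.mkQ)
  have hx0 : x = 0 := by
    rw [← Submodule.mem_bot R, ← hg, Submodule.mem_iInf]
    intro i
    have hgi : S.mkQ (g i) = 0 :=
      (Submodule.Quotient.mk_eq_zero _).2 (Submodule.subset_span ⟨i, rfl⟩)
    simpa [hgi] using LinearMap.congr_fun hx (g i)
  apply hψ
  simpa [hx0] using (LinearMap.congr_fun hx f₀).symm

lemma iInf_ker_eq_bot_of_span_eq_top
    (hA : Function.Injective ((LinearMap.id : (A →ₗ[R] E) →ₗ[R] (A →ₗ[R] E)).flip))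
    {g : κ → A →ₗ[R] E} (hg : Submodule.span R (Set.range g) = ⊤) :
    (⨅ i, LinearMap.ker (g i)) = ⊥ := by
  refine (Submodule.eq_bot_iff _).2 fun x hx ↦ hA ?_
  rw [map_zero, ← LinearMap.ker_eq_top, eq_top_iff, ← hg, Submodule.span_le, Set.range_subset_iff]
  exact fun i ↦ (Submodule.mem_iInf _).1 hx i

end Biduality

theorem cogenerate_iff_generate_dual_general
    {R : Type*} [CommRing R] [IsNoetherianRing R] [IsLocalRing R]
    {E : Type*} [AddCommGroup E] [Module R E]
    (hinj : Module.Injective R E)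
    (ι : ResidueField R →ₗ[R] E) (hι : Function.Injective ι)
    {A : Type*} [AddCommGroup A] [Module R A]
    -- `A` is Matlis dualizable (the biduality map is bijective):
    (hA : Function.Bijective
      ((LinearMap.id : (A →ₗ[R] E) →ₗ[R] (A →ₗ[R] E)).flip))
    {t : ℕ} (g : Fin t → (A →ₗ[R] E)) :
    (⨅ i, LinearMap.ker (g i)) = ⊥ ↔ Submodule.span R (Set.range g) = ⊤ := by
  have : Small.{_} (ResidueField R) := small_of_injective hι
  have : Small.{_} R := small_of_small_residueField
  have hE : Module.Baer R E := .of_injective hinj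
  exact ⟨span_eq_top_of_iInf_ker_eq_bot hE ι hι hA.surjective,
    iInf_ker_eq_bot_of_span_eq_top hA.injective⟩

/-- Let `(R,m,k)` be Noetherian local, `E = E_R(k)`, and `A` a
Matlis-dualizable module.  Elements `g_1, …, g_t ∈ A^∨ = Hom_R(A,E)` have
`⋂ ker g_i = 0` (i.e. they co-generate `A`) iff they generate `A^∨`. -/
theorem cogenerate_iff_generate_dual
    {R : Type*} [CommRing R] [IsNoetherianRing R] [IsLocalRing R]
    {E : Type*} [AddCommGroup E] [Module R E]
    (hinj : Module.Injective R E)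
    (ι : ResidueField R →ₗ[R] E) (hι : Function.Injective ι)
    (hess : ∀ N : Submodule R E, N ≠ ⊥ → LinearMap.range ι ⊓ N ≠ ⊥)
    {A : Type*} [AddCommGroup A] [Module R A]
    -- `A` is Matlis dualizable (the biduality map is bijective):
    (hA : Function.Bijective
      ((LinearMap.id : (A →ₗ[R] E) →ₗ[R] (A →ₗ[R] E)).flip))
    {t : ℕ} (g : Fin t → (A →ₗ[R] E)) :
    (⨅ i, LinearMap.ker (g i)) = ⊥ ↔ Submodule.span R (Set.range g) = ⊤ :=
  cogenerate_iff_generate_dual_general hinj ι hι hA g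
end

section
/- Let (R, m, k) be a Noetherian local ring and A an Artinian R-module. Then g_1, …, g_t ∈ Hom_R(A, E_R(k)) satisfy ∩_i ker(g_i) = 0 if and only if the restrictions of the g_i to soc A (which land in the copy of k inside E) span Hom_R(soc A, k) as a k-vector space. -/
/-! Every map `A → E` sends `soc A` into `soc E`, and `soc E` lies in the copy of `k` because
that copy is essential in `E`. So the restrictions of the `g_i` are `ι ∘ f_i` for functionals
`f_i` on the `k`-vector space `soc A`. As `A` is Artinian, every nonzero submodule of `A`
contains a simple one, which is killed by `m` and hence meets `soc A`; thus `⋂ ker g_i = 0` iff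
`⋂ ker f_i = 0`. For finitely many functionals on a vector space, trivial joint kernel is the
same as spanning the dual space. -/

open IsLocalRing

/-- The socle of a module over a local ring: the elements killed by the maximal ideal. -/
def socle (R M : Type*) [CommRing R] [IsLocalRing R] [AddCommGroup M] [Module R M] :
    Submodule R M where
  carrier := {x | ∀ r ∈ maximalIdeal R, r • x = 0}
  add_mem' := by
    intro a b ha hb r hr
    rw [smul_add, ha r hr, hb r hr, add_zero]
  zero_mem' := by intro r hr; simp
  smul_mem' := by
    intro c x hx r hr
    rw [smul_comm, hx r hr, smul_zero]

section Socle

variable {R M : Type*} [CommRing R] [IsLocalRing R] [AddCommGroup M] [Module R M]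

variable (R M) in
theorem isTorsionBySet_socle : Module.IsTorsionBySet R (socle R M) (maximalIdeal R) :=
  fun x r => Subtype.ext (x.2 r r.2)

noncomputable instance : Module (ResidueField R) (socle R M) :=
  (isTorsionBySet_socle R M).module

instance : IsScalarTower R (ResidueField R) (socle R M) :=
  (isTorsionBySet_socle R M).isScalarTower

theorem le_socle_of_isAtom {S : Submodule R M} (hS : IsAtom S) : S ≤ socle R M := by
  have : IsSimpleModule R S := isSimpleModule_iff_isAtom.mpr hS
  have hann : Module.annihilator R S = maximalIdeal R :=
    eq_maximalIdeal IsSimpleModule.annihilator_isMaximal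
  intro x hx r hr
  rw [← hann, Module.mem_annihilator] at hr
  simpa using congrArg Subtype.val (hr ⟨x, hx⟩)

theorem disjoint_socle_iff [IsArtinian R M] {N : Submodule R M} :
    Disjoint (socle R M) N ↔ N = ⊥ := by
  refine ⟨fun h => ?_, fun h => h ▸ disjoint_bot_right⟩
  by_contra hN
  obtain ⟨S, hS, hSN⟩ := (eq_bot_or_exists_atom_le N).resolve_left hN
  exact hS.1 ((h.mono_right hSN).symm.eq_bot_of_le (le_socle_of_isAtom hS))

theorem socle_le_of_forall_inf_ne_bot {P : Submodule R M}
    (hP : ∀ N : Submodule R M, N ≠ ⊥ → P ⊓ N ≠ ⊥) : socle R M ≤ P := by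
  intro x hx
  obtain rfl | hx0 := eq_or_ne x 0
  · exact P.zero_mem
  obtain ⟨y, ⟨hyP, hyx⟩, hy0⟩ :=
    (Submodule.ne_bot_iff _).mp (hP _ ((Submodule.span_singleton_eq_bot.not).mpr hx0))
  obtain ⟨r, rfl⟩ := Submodule.mem_span_singleton.mp hyx
  have hr : IsUnit r := by
    by_contra hr
    exact hy0 (hx r ((mem_maximalIdeal r).mpr hr))
  simpa [← mul_smul] using P.smul_mem (hr.unit⁻¹ : Rˣ) hyP

theorem map_socle_le {N : Type*} [AddCommGroup N] [Module R N] (f : M →ₗ[R] N) :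
    (socle R M).map f ≤ socle R N := by
  rintro _ ⟨x, hx, rfl⟩ r hr
  rw [← map_smul, hx r hr, map_zero]

end Socle

theorem LinearMap.exists_comp_eq_of_range_le {R M N P : Type*} [CommRing R] [AddCommGroup M]
    [Module R M] [AddCommGroup N] [Module R N] [AddCommGroup P] [Module R P]
    {f : N →ₗ[R] P} (hf : Function.Injective f) {g : M →ₗ[R] P} (h : range g ≤ range f) :
    ∃ g' : M →ₗ[R] N, f.comp g' = g :=
  ⟨(LinearEquiv.ofInjective f hf).symm.toLinearMap ∘ₗ g.codRestrict (range f) fun x => h ⟨x, rfl⟩,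
    by ext x; simp⟩

theorem iInf_ker_eq_bot_iff_forall_exists_eq_sum {R K V ι : Type*} [CommRing R] [Field K]
    [Algebra R K] (hRK : Function.Surjective (algebraMap R K)) [AddCommGroup V] [Module R V]
    [Module K V] [IsScalarTower R K V] [Fintype ι] (f : ι → V →ₗ[R] K) :
    (⨅ i, LinearMap.ker (f i)) = ⊥ ↔ ∀ h : V →ₗ[R] K, ∃ c : ι → R, h = ∑ i, c i • f i := by
  let e := LinearMap.extendScalarsOfSurjectiveEquiv (M := V) (N := K) hRK
  have he (l : V →ₗ[R] K) (x : V) : e l x = l x := rfl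
  constructor
  · intro hker h
    have hle : ⨅ i, LinearMap.ker (e (f i)) ≤ LinearMap.ker (e h) := by
      intro x hx
      have hx0 : x ∈ ⨅ i, LinearMap.ker (f i) := by simpa [Submodule.mem_iInf, he] using hx
      rw [hker, Submodule.mem_bot] at hx0
      simp [hx0]
    obtain ⟨c, hc⟩ :=
      (Submodule.mem_span_range_iff_exists_fun K).mp (mem_span_of_iInf_ker_le_ker hle)
    choose d hd using fun i => hRK (c i)
    refine ⟨d, e.injective ?_⟩
    rw [← hc, map_sum]
    simp only [map_smul, ← hd, algebraMap_smul]
  · intro hspan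
    refine eq_bot_iff.mpr fun x hx => (Submodule.mem_bot K).mpr ?_
    refine (Module.forall_dual_apply_eq_zero_iff K x).mp fun φ => ?_
    obtain ⟨c, hc⟩ := hspan (φ.restrictScalars R)
    simp only [Submodule.mem_iInf, LinearMap.mem_ker] at hx
    simpa [hx] using LinearMap.congr_fun hc x

theorem cogenerate_iff_restrictions_span_socle_dual_general
    {R : Type*} [CommRing R] [IsLocalRing R]
    {E : Type*} [AddCommGroup E] [Module R E]
    (ι : ResidueField R →ₗ[R] E) (hι : Function.Injective ι)
    (hess : ∀ N : Submodule R E, N ≠ ⊥ → LinearMap.range ι ⊓ N ≠ ⊥)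
    {A : Type*} [AddCommGroup A] [Module R A] [IsArtinian R A]
    {t : ℕ} (g : Fin t → (A →ₗ[R] E)) :
    (⨅ i, LinearMap.ker (g i)) = ⊥ ↔
      ∀ h : ↥(socle R A) →ₗ[R] ResidueField R, ∃ c : Fin t → R,
        ι.comp h = ∑ i, c i • ((g i).comp (socle R A).subtype) := by
  have hrange (i) : LinearMap.range ((g i).comp (socle R A).subtype) ≤ LinearMap.range ι := by
    rw [LinearMap.range_comp, Submodule.range_subtype]
    exact (map_socle_le (g i)).trans (socle_le_of_forall_inf_ne_bot hess)
  choose f hf using fun i => LinearMap.exists_comp_eq_of_range_le hι (hrange i)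
  have hker : (⨅ i, LinearMap.ker (g i)) = ⊥ ↔ (⨅ i, LinearMap.ker (f i)) = ⊥ := by
    rw [← disjoint_socle_iff, Submodule.disjoint_iff_comap_eq_bot, Submodule.comap_iInf]
    simp_rw [← LinearMap.ker_comp, ← hf,
      LinearMap.ker_comp_of_ker_eq_bot _ (LinearMap.ker_eq_bot.mpr hι)]
  have hspan (h : socle R A →ₗ[R] ResidueField R) (c : Fin t → R) :
      ι.comp h = ∑ i, c i • (g i).comp (socle R A).subtype ↔ h = ∑ i, c i • f i := by
    have hsum : ι.comp (∑ i, c i • f i) = ∑ i, c i • (g i).comp (socle R A).subtype := by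
      ext x
      simp [← hf]
    rw [← hsum, LinearMap.cancel_left hι]
  simp only [hker, hspan]
  exact iInf_ker_eq_bot_iff_forall_exists_eq_sum residue_surjective f

/-- Let `(R,m,k)` be Noetherian local, `E = E_R(k)` with embedding
`ι : k → E`, and `A` an Artinian module.  Maps `g_1, …, g_t : A → E` satisfy
`⋂ ker g_i = 0` iff their restrictions to `soc A` (which land in the copy of `k`
inside `E`) span `Hom_R(soc A, k)`: every `h : soc A → k` satisfies
`ι ∘ h = ∑ c_i • (g_i |_{soc A})` for some coefficients `c_i`. -/
theorem cogenerate_iff_restrictions_span_socle_dual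
    {R : Type*} [CommRing R] [IsNoetherianRing R] [IsLocalRing R]
    {E : Type*} [AddCommGroup E] [Module R E]
    (hinj : Module.Injective R E)
    (ι : ResidueField R →ₗ[R] E) (hι : Function.Injective ι)
    (hess : ∀ N : Submodule R E, N ≠ ⊥ → LinearMap.range ι ⊓ N ≠ ⊥)
    {A : Type*} [AddCommGroup A] [Module R A] [IsArtinian R A]
    {t : ℕ} (g : Fin t → (A →ₗ[R] E)) :
    (⨅ i, LinearMap.ker (g i)) = ⊥ ↔
      ∀ h : ↥(socle R A) →ₗ[R] ResidueField R, ∃ c : Fin t → R,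
        ι.comp h = ∑ i, c i • ((g i).comp (socle R A).subtype) :=
  cogenerate_iff_restrictions_span_socle_dual_general ι hι hess g
end

section
/- Let cl be a functorial residual closure operation on R-modules, and L ⊆ M modules on which the relevant closures are defined. Then the finitistic closure satisfies L^{cl_f}_M = ∪ {(L ∩ U)^{cl}_U : U a finitely generated submodule of M}, where L^{cl_f}_M = ∪ {L^{cl}_N : L ⊆ N ⊆ M, N/L finitely generated}. -/
/-!
If `U ≤ N ≤ L + U`, the map `U → N/(L ∩ N)` is surjective with kernel `L ∩ U`, so
residuality makes `(L ∩ U)^{cl}_U` and `(L ∩ N)^{cl}_N` the preimages of the same submodule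
`0^{cl}_{N/(L ∩ N)}`. Every `N` with `N/(L ∩ N)` finitely generated contains such a finitely
generated `U` through any given `z ∈ N`, and every finitely generated `U` arises this way from
`N = L + U`.
-/

open Submodule

def IsResidual {R : Type} [CommRing R]
    (cl : ∀ (X : Type) [AddCommGroup X] [Module R X], Submodule R X → Submodule R X) : Prop :=
  ∀ (X : Type) [AddCommGroup X] [Module R X] (Y : Type) [AddCommGroup Y] [Module R Y]
    (q : X →ₗ[R] Y), Function.Surjective q → cl X (LinearMap.ker q) = comap q (cl Y ⊥)

namespace IsResidual

variable {R : Type} [CommRing R]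
  {cl : ∀ (X : Type) [AddCommGroup X] [Module R X], Submodule R X → Submodule R X}

theorem mem_cl_ker_iff_of_comp_eq (hres : IsResidual cl)
    {X Y Z : Type} [AddCommGroup X] [Module R X] [AddCommGroup Y] [Module R Y]
    [AddCommGroup Z] [Module R Z] {q : X →ₗ[R] Y} {p : Z →ₗ[R] Y} (g : X →ₗ[R] Z)
    (hq : Function.Surjective q) (hp : Function.Surjective p) (hpg : p ∘ₗ g = q) (x : X) :
    x ∈ cl X (LinearMap.ker q) ↔ g x ∈ cl Z (LinearMap.ker p) := by
  rw [hres X Y q hq, hres Z Y p hp, mem_comap, mem_comap, ← hpg, LinearMap.comp_apply]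

end IsResidual

namespace Submodule

variable {R M : Type} [CommRing R] [AddCommGroup M] [Module R M]

theorem comap_subtype_inf_left (L U : Submodule R M) :
    comap U.subtype (L ⊓ U) = comap U.subtype L := by
  rw [comap_inf, comap_subtype_self, inf_top_eq]

theorem exists_fg_map_eq_top {A B : Type} [AddCommGroup A] [Module R A] [AddCommGroup B]
    [Module R B] [Module.Finite R B] {p : A →ₗ[R] B} (hp : Function.Surjective p) :
    ∃ U : Submodule R A, U.FG ∧ U.map p = ⊤ := by
  obtain ⟨n, f, hf⟩ := Module.Finite.exists_fin' R B
  obtain ⟨g, hg⟩ := Module.projective_lifting_property p f hp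
  exact ⟨LinearMap.range g, fg_range g, by
    rw [← LinearMap.range_comp, hg, LinearMap.range_eq_top.2 hf]⟩

theorem ker_mkQ_comp_inclusion (L : Submodule R M) {U N : Submodule R M} (hUN : U ≤ N) :
    LinearMap.ker ((comap N.subtype L).mkQ ∘ₗ inclusion hUN) = comap U.subtype L := by
  rw [LinearMap.ker_comp, ker_mkQ]
  rfl

theorem mkQ_comp_inclusion_surjective {L U N : Submodule R M} (hUN : U ≤ N)
    (hNLU : N ≤ L ⊔ U) :
    Function.Surjective ((comap N.subtype L).mkQ ∘ₗ inclusion hUN) := by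
  intro y
  obtain ⟨⟨n, hnN⟩, rfl⟩ := mkQ_surjective _ y
  obtain ⟨l, hl, u, hu, rfl⟩ := mem_sup.1 (hNLU hnN)
  refine ⟨⟨u, hu⟩, (Submodule.Quotient.eq _).2 ?_⟩
  simpa using neg_mem hl

theorem finite_quotient_sup_of_fg (L : Submodule R M) {U : Submodule R M} (hU : U.FG) :
    Module.Finite R (↥(L ⊔ U) ⧸ comap (L ⊔ U).subtype L) :=
  haveI := Module.Finite.iff_fg.2 hU
  Module.Finite.of_surjective _ (mkQ_comp_inclusion_surjective le_sup_right le_rfl)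

theorem exists_fg_le_le_sup_of_finite_quotient (L : Submodule R M) {N : Submodule R M}
    [Module.Finite R (↥N ⧸ comap N.subtype L)] {z : M} (hz : z ∈ N) :
    ∃ U : Submodule R M, U.FG ∧ U ≤ N ∧ N ≤ L ⊔ U ∧ z ∈ U := by
  obtain ⟨W, hWfg, hW⟩ := exists_fg_map_eq_top (mkQ_surjective (comap N.subtype L))
  have hLW : comap N.subtype L ⊔ (W ⊔ span R {⟨z, hz⟩}) = ⊤ :=
    eq_top_mono (sup_le_sup_left le_sup_left _) ((map_mkQ_eq_top _ _).1 hW)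
  refine ⟨(W ⊔ span R {⟨z, hz⟩}).map N.subtype, (hWfg.sup (fg_span_singleton _)).map _,
    map_subtype_le _ _, ?_, mem_map_of_mem (mem_sup_right (mem_span_singleton_self _))⟩
  calc N = (comap N.subtype L ⊔ (W ⊔ span R {⟨z, hz⟩})).map N.subtype := by
        rw [hLW, map_subtype_top]
    _ ≤ L ⊔ (W ⊔ span R {⟨z, hz⟩}).map N.subtype := by
        rw [Submodule.map_sup, map_comap_subtype]
        exact sup_le_sup_right inf_le_right _

end Submodule

theorem IsResidual.mem_cl_comap_subtype_iff {R M : Type} [CommRing R] [AddCommGroup M]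
    [Module R M]
    {cl : ∀ (X : Type) [AddCommGroup X] [Module R X], Submodule R X → Submodule R X}
    (hres : IsResidual cl) {L U N : Submodule R M} (hUN : U ≤ N) (hNLU : N ≤ L ⊔ U) {z : M}
    (hz : z ∈ U) :
    (⟨z, hz⟩ : ↥U) ∈ cl ↥U (comap U.subtype L) ↔
      (⟨z, hUN hz⟩ : ↥N) ∈ cl ↥N (comap N.subtype L) := by
  have := hres.mem_cl_ker_iff_of_comp_eq (inclusion hUN) (mkQ_comp_inclusion_surjective hUN hNLU)
    (mkQ_surjective _) rfl ⟨z, hz⟩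
  rwa [ker_mkQ_comp_inclusion, ker_mkQ] at this

theorem finitistic_closure_eq_union_over_fg_submodules_general
    {R : Type} [CommRing R]
    (cl : ∀ (X : Type) [AddCommGroup X] [Module R X], Submodule R X → Submodule R X)
    -- `cl` is residual:
    (hres : ∀ (X : Type) [AddCommGroup X] [Module R X] (Y : Type) [AddCommGroup Y]
      [Module R Y] (q : X →ₗ[R] Y), Function.Surjective q →
        cl X (LinearMap.ker q) = Submodule.comap q (cl Y ⊥))
    {M : Type} [AddCommGroup M] [Module R M] (L : Submodule R M) :
    ∀ z : M,
      (∃ N : Submodule R M, ∃ hLN : L ≤ N, ∃ hz : z ∈ N,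
        Module.Finite R (↥N ⧸ Submodule.comap N.subtype L) ∧
        (⟨z, hz⟩ : ↥N) ∈ cl ↥N (Submodule.comap N.subtype L)) ↔
      (∃ U : Submodule R M, ∃ hz : z ∈ U, U.FG ∧
        (⟨z, hz⟩ : ↥U) ∈ cl ↥U (Submodule.comap U.subtype (L ⊓ U))) := by
  intro z
  constructor
  · rintro ⟨N, -, hzN, hfin, hzcl⟩
    obtain ⟨U, hUfg, hUN, hNLU, hzU⟩ := exists_fg_le_le_sup_of_finite_quotient L hzN
    refine ⟨U, hzU, hUfg, ?_⟩
    rwa [comap_subtype_inf_left, IsResidual.mem_cl_comap_subtype_iff hres hUN hNLU]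
  · rintro ⟨U, hzU, hUfg, hzcl⟩
    rw [comap_subtype_inf_left,
      IsResidual.mem_cl_comap_subtype_iff hres le_sup_right le_rfl] at hzcl
    exact ⟨L ⊔ U, le_sup_left, _, finite_quotient_sup_of_fg L hUfg, hzcl⟩

/-- For a functorial residual closure operation `cl`, the finitistic
version satisfies
`L^{cl_f}_M = ⋃ {(L ∩ U)^{cl}_U : U a finitely generated submodule of M}`,
where `L^{cl_f}_M = ⋃ {L^{cl}_N : L ⊆ N ⊆ M, N/L finitely generated}`. -/
theorem finitistic_closure_eq_union_over_fg_submodules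
    {R : Type} [CommRing R]
    (cl : ∀ (X : Type) [AddCommGroup X] [Module R X], Submodule R X → Submodule R X)
    -- `cl` is a closure operation:
    (hext : ∀ (X : Type) [AddCommGroup X] [Module R X] (L : Submodule R X), L ≤ cl X L)
    (hmono : ∀ (X : Type) [AddCommGroup X] [Module R X] (L L' : Submodule R X),
      L ≤ L' → cl X L ≤ cl X L')
    (hidem : ∀ (X : Type) [AddCommGroup X] [Module R X] (L : Submodule R X),
      cl X (cl X L) = cl X L)
    -- `cl` is functorial:
    (hfun : ∀ (X : Type) [AddCommGroup X] [Module R X] (Y : Type) [AddCommGroup Y]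
      [Module R Y] (g : X →ₗ[R] Y) (L : Submodule R X),
        Submodule.map g (cl X L) ≤ cl Y (Submodule.map g L))
    -- `cl` is residual:
    (hres : ∀ (X : Type) [AddCommGroup X] [Module R X] (Y : Type) [AddCommGroup Y]
      [Module R Y] (q : X →ₗ[R] Y), Function.Surjective q →
        cl X (LinearMap.ker q) = Submodule.comap q (cl Y ⊥))
    {M : Type} [AddCommGroup M] [Module R M] (L : Submodule R M) :
    ∀ z : M,
      (∃ N : Submodule R M, ∃ hLN : L ≤ N, ∃ hz : z ∈ N,
        Module.Finite R (↥N ⧸ Submodule.comap N.subtype L) ∧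
        (⟨z, hz⟩ : ↥N) ∈ cl ↥N (Submodule.comap N.subtype L)) ↔
      (∃ U : Submodule R M, ∃ hz : z ∈ U, U.FG ∧
        (⟨z, hz⟩ : ↥U) ∈ cl ↥U (Submodule.comap U.subtype (L ⊓ U))) :=
  finitistic_closure_eq_union_over_fg_submodules_general cl hres L
end
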